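/- Let i : A → B be a ring homomorphism such that i⁺ : B⁺ → A⁺ splits as (A,A)-bimodules, where M⁺ = Hom_ℤ(M, ℚ/ℤ). Then i : A → B is a pure morphism both of left A-modules and of right A-modules. -/

import Mathlib

open scoped TensorProduct
open MulOpposite

/-- The subgroup of `L ⊗[ℤ] M` by which one quotients to obtain the tensor product
`L ⊗[A] M` of a right `A`-module `L` and a left `A`-module `M` over a
(not necessarily commutative) ring `A`. -/
noncomputable def NCrel (A : Type) [Ring A] (L M : Type) [AddCommGroup L]
    [AddCommGroup M] [Module Aᵐᵒᵖ L] [Module A M] : AddSubgroup (L ⊗[ℤ] M) :=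
  AddSubgroup.closure
    {x | ∃ (l : L) (a : A) (m : M), x = (op a • l) ⊗ₜ[ℤ] m - l ⊗ₜ[ℤ] (a • m)}

/-- The tensor product `L ⊗[A] M` over a (not necessarily commutative) ring `A` of a
right `A`-module `L` and a left `A`-module `M`, as an abelian group. -/
abbrev NCT (A : Type) [Ring A] (L M : Type) [AddCommGroup L] [AddCommGroup M]
    [Module Aᵐᵒᵖ L] [Module A M] : Type :=
  (L ⊗[ℤ] M) ⧸ NCrel A L M

/-- The elementary tensor `l ⊗ m` in `L ⊗[A] M`. -/
noncomputable def NCT.tmul (A : Type) [Ring A] {L M : Type} [AddCommGroup L]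
    [AddCommGroup M] [Module Aᵐᵒᵖ L] [Module A M] (l : L) (m : M) : NCT A L M :=
  QuotientAddGroup.mk (l ⊗ₜ[ℤ] m)

/-- The map `L ⊗[A] f : L ⊗[A] M → L ⊗[A] N` induced by a morphism `f : M → N` of left
`A`-modules. -/
noncomputable def NCT.mapRight (A : Type) [Ring A] (L : Type) [AddCommGroup L]
    [Module Aᵐᵒᵖ L] {M N : Type} [AddCommGroup M] [AddCommGroup N] [Module A M]
    [Module A N] (f : M →+ N) (hf : ∀ (a : A) (m : M), f (a • m) = a • f m) :
    NCT A L M →+ NCT A L N :=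
  QuotientAddGroup.map _ _
    (TensorProduct.map LinearMap.id f.toIntLinearMap).toAddMonoidHom
    (by
      refine (AddSubgroup.closure_le _).mpr ?_
      rintro x ⟨l, a, m, rfl⟩
      simp only [SetLike.mem_coe, AddSubgroup.mem_comap, map_sub,
        LinearMap.toAddMonoidHom_coe, TensorProduct.map_tmul, LinearMap.id_coe, id_eq,
        AddMonoidHom.coe_toIntLinearMap]
      exact AddSubgroup.subset_closure ⟨l, a, f m, by rw [hf]⟩)

/-- The map `f ⊗[A] M : L ⊗[A] M → L' ⊗[A] M` induced by a morphism `f : L → L'` of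
right `A`-modules. -/
noncomputable def NCT.mapLeft (A : Type) [Ring A] {L L' : Type} [AddCommGroup L]
    [AddCommGroup L'] [Module Aᵐᵒᵖ L] [Module Aᵐᵒᵖ L'] (M : Type) [AddCommGroup M]
    [Module A M] (f : L →+ L') (hf : ∀ (a : Aᵐᵒᵖ) (l : L), f (a • l) = a • f l) :
    NCT A L M →+ NCT A L' M :=
  QuotientAddGroup.map _ _
    (TensorProduct.map f.toIntLinearMap LinearMap.id).toAddMonoidHom
    (by
      refine (AddSubgroup.closure_le _).mpr ?_
      rintro x ⟨l, a, m, rfl⟩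
      simp only [SetLike.mem_coe, AddSubgroup.mem_comap, map_sub,
        LinearMap.toAddMonoidHom_coe, TensorProduct.map_tmul, LinearMap.id_coe, id_eq,
        AddMonoidHom.coe_toIntLinearMap]
      exact AddSubgroup.subset_closure ⟨f l, a, m, by rw [hf]⟩)

/-- `i : A → B` is a pure morphism of left `A`-modules: for every right `A`-module `L`,
the map `L ⊗[A] i : L ⊗[A] A → L ⊗[A] B` is injective.  Here `B` is a left `A`-module
via `i`. -/
noncomputable def RingHom.LeftPure {A B : Type} [Ring A] [Ring B] (i : A →+* B) :
    Prop :=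
  ∀ (L : Type) (_ : AddCommGroup L) (_ : Module Aᵐᵒᵖ L),
    letI : Module A B := Module.compHom B i
    Function.Injective
      (NCT.mapRight A L (M := A) (N := B) i.toAddMonoidHom
        (fun a m => show i (a * m) = i a * i m from map_mul i a m))

/-- `i : A → B` is a pure morphism of right `A`-modules: for every left `A`-module `L`,
the map `i ⊗[A] L : A ⊗[A] L → B ⊗[A] L` is injective.  Here `B` is a right `A`-module
via `i`. -/
noncomputable def RingHom.RightPure {A B : Type} [Ring A] [Ring B] (i : A →+* B) :
    Prop :=
  ∀ (L : Type) (_ : AddCommGroup L) (_ : Module A L),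
    letI : Module Aᵐᵒᵖ B := Module.compHom B (RingHom.op i)
    Function.Injective
      (NCT.mapLeft A (L := A) (L' := B) L i.toAddMonoidHom
        (fun a l => show i (l * a.unop) = i l * i a.unop from map_mul i l a.unop))


/-- The rational circle group `ℚ/ℤ`. -/
abbrev QZ : Type := AddCircle (1 : ℚ)

/-- The `(A,A)`-bimodule action `(a · f · a') (x) = f (a' * x * a)` on the character
bimodule `A⁺ = Hom_ℤ(A, ℚ/ℤ)` of a ring `A`. -/
def charAct {A : Type} [Ring A] (a a' : A) (f : A →+ QZ) : A →+ QZ :=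
  AddMonoidHom.mk' (fun x => f (a' * x * a))
    (by intro x y; simp [mul_add, add_mul])

/-! A character of `L ⊗[A] A` is a balanced biadditive map, i.e. an additive map
`f : L → A⁺` with `f (l a) = f l · a`. Composing with a right `A`-linear section `s` of `i⁺`
gives an additive map `L → B⁺` that is balanced over `B`, hence a character of `L ⊗[A] B`,
and it restricts to the given one along `L ⊗ i` because `s` is a section. As every character
extends and `ℚ/ℤ` is an injective cogenerator, `L ⊗ i` is injective. Right purity is the
mirror image, using that `s` is left `A`-linear. -/

namespace NCT

variable {A : Type} [Ring A] {L M C : Type} [AddCommGroup L] [AddCommGroup M]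
  [Module Aᵐᵒᵖ L] [Module A M] [AddCommGroup C]

theorem tmul_add (l : L) (m m' : M) : tmul A l (m + m') = tmul A l m + tmul A l m' := by
  simp only [tmul, TensorProduct.tmul_add, QuotientAddGroup.mk_add]

theorem add_tmul (l l' : L) (m : M) : tmul A (l + l') m = tmul A l m + tmul A l' m := by
  simp only [tmul, TensorProduct.add_tmul, QuotientAddGroup.mk_add]

theorem op_smul_tmul (a : A) (l : L) (m : M) : tmul A (op a • l) m = tmul A l (a • m) :=
  QuotientAddGroup.eq_iff_sub_mem.mpr (AddSubgroup.subset_closure ⟨l, a, m, rfl⟩)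

theorem addHom_ext {φ ψ : NCT A L M →+ C} (h : ∀ l m, φ (tmul A l m) = ψ (tmul A l m)) :
    φ = ψ := by
  refine QuotientAddGroup.addMonoidHom_ext _ (AddMonoidHom.toIntLinearMap_injective ?_)
  exact TensorProduct.ext' h

variable (A) in
noncomputable def mk : L →+ M →+ NCT A L M :=
  AddMonoidHom.mk' (fun l => AddMonoidHom.mk' (tmul A l) (tmul_add l))
    fun l l' => AddMonoidHom.ext (add_tmul l l')

noncomputable def lift (F : L →+ M →+ C) (hF : ∀ (a : A) l m, F (op a • l) m = F l (a • m)) :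
    NCT A L M →+ C :=
  QuotientAddGroup.lift _ (TensorProduct.liftAddHom F fun n l m => by simp) <| by
    refine (AddSubgroup.closure_le _).mpr ?_
    rintro _ ⟨l, a, m, rfl⟩
    simp [hF]

end NCT

theorem AddMonoidHom.injective_of_characters_extend {X Y : Type} [AddCommGroup X]
    [AddCommGroup Y] (φ : X →+ Y) (h : ∀ χ : X →+ QZ, ∃ ψ : Y →+ QZ, ψ.comp φ = χ) :
    Function.Injective φ :=
  CharacterModule.dual_surjective_iff_injective (f := φ.toIntLinearMap) |>.mp h

namespace RingHom

variable {A B : Type} [Ring A] [Ring B] (i : A →+* B) (s : (A →+ QZ) →+ (B →+ QZ))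

theorem leftPure_of_dual_section (hsec : ∀ f : A →+ QZ, (s f).comp i.toAddMonoidHom = f)
    (hright : ∀ (f : A →+ QZ) (a : A) (b : B), s (charAct 1 a f) b = s f (i a * b)) :
    i.LeftPure := by
  intro L _ _
  let _ : Module A B := Module.compHom B i
  refine AddMonoidHom.injective_of_characters_extend _ fun χ => ?_
  let f : L →+ A →+ QZ := (NCT.mk A).compr₂ χ
  have hf : ∀ (a : A) (l : L), f (MulOpposite.op a • l) = charAct 1 a (f l) := fun a l =>
    AddMonoidHom.ext fun x => by
      show χ (NCT.tmul A (MulOpposite.op a • l) x) = χ (NCT.tmul A l (a * x * 1))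
      rw [mul_one, NCT.op_smul_tmul, smul_eq_mul]
  refine ⟨NCT.lift (s.comp f) fun a l b => ?_, NCT.addHom_ext fun l a => ?_⟩
  · show s (f _) b = s (f l) (i a * b)
    rw [hf, hright]
  · show s (f l) (i a) = f l a
    exact DFunLike.congr_fun (hsec (f l)) a

theorem rightPure_of_dual_section (hsec : ∀ f : A →+ QZ, (s f).comp i.toAddMonoidHom = f)
    (hleft : ∀ (f : A →+ QZ) (a : A) (b : B), s (charAct a 1 f) b = s f (b * i a)) :
    i.RightPure := by
  intro L _ _
  let _ : Module Aᵐᵒᵖ B := Module.compHom B (RingHom.op i)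
  refine AddMonoidHom.injective_of_characters_extend _ fun χ => ?_
  let f : L →+ A →+ QZ := (NCT.mk A).flip.compr₂ χ
  have hf : ∀ (a : A) (l : L), f (a • l) = charAct a 1 (f l) := fun a l =>
    AddMonoidHom.ext fun x => by
      show χ (NCT.tmul A x (a • l)) = χ (NCT.tmul A (1 * x * a) l)
      rw [one_mul, ← NCT.op_smul_tmul, op_smul_eq_mul]
  refine ⟨NCT.lift (s.comp f).flip fun a b l => ?_, NCT.addHom_ext fun a l => ?_⟩
  · show s (f l) (b * i a) = s (f _) b
    rw [hf, hleft]
  · show s (f l) (i a) = f l a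
    exact DFunLike.congr_fun (hsec (f l)) a

end RingHom

/-- Let `i : A → B` be a ring homomorphism such that
`i⁺ : B⁺ → A⁺` splits as `(A,A)`-bimodules, where `M⁺ = Hom_ℤ(M, ℚ/ℤ)`; i.e. there is
an additive section `s : A⁺ → B⁺` of precomposition with `i` which is equivariant for
the `(A,A)`-bimodule actions.  Then `i` is a pure morphism both of left `A`-modules and
of right `A`-modules. -/
theorem stmt19 {A B : Type} [Ring A] [Ring B] (i : A →+* B)
    (s : (A →+ QZ) →+ (B →+ QZ))
    (hsec : ∀ f : A →+ QZ, (s f).comp i.toAddMonoidHom = f)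
    (hequiv : ∀ (f : A →+ QZ) (a a' : A) (b : B),
      s (charAct a a' f) b = s f (i a' * b * i a)) :
    i.LeftPure ∧ i.RightPure :=
  ⟨i.leftPure_of_dual_section s hsec fun f a b => by rw [hequiv, map_one, mul_one],
    i.rightPure_of_dual_section s hsec fun f a b => by rw [hequiv, map_one, one_mul]⟩
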